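/- For η < −1 and strike K > 0, the exponentially dampened call payoff x ↦ e^{ηx}(e^x − K)^+ belongs to L¹(ℝ), and its Fourier transform equals f̂^K(z − iη) = K^{iz+1+η} / ((iz+η)(iz+1+η)) for every z ∈ ℝ; moreover k ↦ f̂^{e^k}(z − iη) extends holomorphically in k = log K to all of ℂ. -/

import Mathlib

/-!
Put `a = log K`. The damped payoff vanishes for `x ≤ a` and equals `e^{(η+1)x} - K e^{ηx}` for
`x > a`, so with `c = iz + η` its Fourier transform is `∫_a^∞ (e^{(c+1)x} - e^a e^{cx}) dx`. Both
exponents have negative real part because `η < -1`, and the integral evaluates to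
`e^{(c+1)a} (1/c - 1/(c+1)) = e^{(c+1)a} / (c(c+1)) = K^{c+1} / (c(c+1))`. The middle form is an
entire function of `a`, which gives the holomorphic extension in `k = log K`.
-/

open MeasureTheory Set Complex

lemma exp_mul_max_exp_sub_eq_indicator (η : ℝ) {K : ℝ} (hK : 0 < K) :
    (fun x : ℝ => Real.exp (η * x) * max (Real.exp x - K) 0) =
      (Ioi (Real.log K)).indicator
        (fun x => Real.exp ((η + 1) * x) - K * Real.exp (η * x)) := by
  funext x
  rcases le_or_gt x (Real.log K) with hx | hx
  · have : Real.exp x ≤ K := (Real.le_log_iff_exp_le hK).1 hx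
    simp [indicator_of_notMem (notMem_Ioi.2 hx), max_eq_right (sub_nonpos.2 this)]
  · have : K < Real.exp x := (Real.log_lt_iff_lt_exp hK).1 hx
    rw [indicator_of_mem (mem_Ioi.2 hx), max_eq_left (sub_nonneg.2 this.le), add_mul, one_mul,
      Real.exp_add]
    ring

lemma integrable_exp_mul_max_exp_sub {η : ℝ} (hη : η < -1) {K : ℝ} (hK : 0 < K) :
    Integrable (fun x : ℝ => Real.exp (η * x) * max (Real.exp x - K) 0) := by
  rw [exp_mul_max_exp_sub_eq_indicator η hK, integrable_indicator_iff measurableSet_Ioi]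
  exact (integrableOn_exp_mul_Ioi (by linarith) _).sub
    ((integrableOn_exp_mul_Ioi (by linarith) _).const_mul K)

lemma integral_Ioi_cexp_add_one_mul_sub {c : ℂ} (hc : c.re < -1) (a : ℝ) :
    ∫ x : ℝ in Ioi a, (cexp ((c + 1) * x) - Real.exp a * cexp (c * x)) =
      cexp ((c + 1) * a) / (c * (c + 1)) := by
  have hc₀ : c.re < 0 := by linarith
  have hc₁ : (c + 1).re < 0 := by simpa using (by linarith : c.re + 1 < 0)
  have hc₀' : c ≠ 0 := fun h => by simp [h] at hc₀
  have hc₁' : c + 1 ≠ 0 := fun h => by simp [h] at hc₁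
  have hshift : (Real.exp a : ℂ) * cexp (c * a) = cexp ((c + 1) * a) := by
    rw [ofReal_exp, ← Complex.exp_add]
    ring_nf
  rw [integral_sub (integrableOn_exp_mul_complex_Ioi hc₁ a)
      ((integrableOn_exp_mul_complex_Ioi hc₀ a).const_mul _),
    integral_const_mul, integral_exp_mul_complex_Ioi hc₁, integral_exp_mul_complex_Ioi hc₀,
    mul_div_assoc', mul_neg, hshift]
  field_simp
  ring

lemma fourier_exp_mul_max_exp_sub {η : ℝ} (hη : η < -1) {K : ℝ} (hK : 0 < K) (z : ℝ) :
    ∫ x : ℝ, cexp (I * z * x) * ((Real.exp (η * x) * max (Real.exp x - K) 0 : ℝ) : ℂ) =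
      cexp ((I * z + 1 + η) * Real.log K) / ((I * z + η) * (I * z + 1 + η)) := by
  have hintegrand : (fun x : ℝ =>
      cexp (I * z * x) * ((Real.exp (η * x) * max (Real.exp x - K) 0 : ℝ) : ℂ)) =
      (Ioi (Real.log K)).indicator (fun x : ℝ =>
        cexp ((I * z + η + 1) * x) - Real.exp (Real.log K) * cexp ((I * z + η) * x)) := by
    funext x
    rw [congrFun (exp_mul_max_exp_sub_eq_indicator η hK) x, Real.exp_log hK]
    by_cases hx : x ∈ Ioi (Real.log K)
    · simp only [indicator_of_mem hx]
      push_cast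
      simp only [add_mul, one_mul, Complex.exp_add]
      ring
    · simp [indicator_of_notMem hx]
  have hc : (I * z + η : ℂ).re < -1 := by simpa using hη
  rw [hintegrand, integral_indicator measurableSet_Ioi, integral_Ioi_cexp_add_one_mul_sub hc]
  ring_nf

theorem stmt12 (η : ℝ) (hη : η < -1) (K : ℝ) (hK : 0 < K) :
    Integrable (fun x : ℝ => Real.exp (η * x) * max (Real.exp x - K) 0) ∧
    (∀ z : ℝ,
      (∫ x : ℝ, Complex.exp (Complex.I * z * x) *
          ((Real.exp (η * x) * max (Real.exp x - K) 0 : ℝ) : ℂ)) =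
        (K : ℂ) ^ (Complex.I * z + 1 + η) /
          ((Complex.I * z + η) * (Complex.I * z + 1 + η))) ∧
    (∀ z : ℝ, ∃ g : ℂ → ℂ, Differentiable ℂ g ∧ ∀ k : ℝ,
      g k = ∫ x : ℝ, Complex.exp (Complex.I * z * x) *
        ((Real.exp (η * x) * max (Real.exp x - Real.exp k) 0 : ℝ) : ℂ)) := by
  refine ⟨integrable_exp_mul_max_exp_sub hη hK, fun z => ?_, fun z => ?_⟩
  · rw [fourier_exp_mul_max_exp_sub hη hK, cpow_def_of_ne_zero (ofReal_ne_zero.2 hK.ne'),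
      ← ofReal_log hK.le, mul_comm]
  · refine ⟨fun w => cexp ((I * z + 1 + η) * w) / ((I * z + η) * (I * z + 1 + η)),
      by fun_prop, fun k => ?_⟩
    rw [fourier_exp_mul_max_exp_sub hη (Real.exp_pos k), Real.log_exp]
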